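/- Fix an integer ℓ ≥ 1, an integer r with −1 ≤ r ≤ 2ℓ−2, and a ∈ (0, 1/2). For m ∈ ℕ set n = 2ℓm + r, and define C_n(x) = Σ_{j=0}^{m−1} Σ_{k=0}^{ℓ−1} ( (ℓj+k) sin((ℓj+k)x) + (n−ℓ+1−ℓj+k) sin((n−ℓ+1−ℓj+k)x) )² + Σ_{j=ℓm}^{ℓm+r} j² sin²(jx), and E_ℓ(n) = [0, π/2] \ ⋃_{i=0}^{⌊ℓ/2⌋} [iπ/ℓ − n^{−a}, iπ/ℓ + n^{−a}]. Then there exist C > 0 and N ∈ ℕ such that for all m with n = 2ℓm + r ≥ N and all x ∈ E_ℓ(n), | C_n(x) − n³(2 − u_ℓ(x) cos(nx))/12 | ≤ C n^{2+a}. -/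

import Mathlib

set_option maxHeartbeats 1600000


open Real

/-- `u_ℓ(s) = sin(ℓ s) / (ℓ sin s)`. -/
noncomputable def uFun (ℓ : ℕ) (s : ℝ) : ℝ := Real.sin (ℓ * s) / (ℓ * Real.sin s)

/-- `E_ℓ(n) = [0, π/2] \ ⋃_{i=0}^{⌊ℓ/2⌋} [iπ/ℓ − n^{−a}, iπ/ℓ + n^{−a}]`. -/
noncomputable def ESet (ℓ : ℕ) (a : ℝ) (n : ℕ) : Set ℝ :=
  Set.Icc (0:ℝ) (π / 2) \
    ⋃ i ∈ Finset.range (ℓ / 2 + 1),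
      Set.Icc ((i : ℝ) * π / ℓ - (n : ℝ) ^ (-a)) ((i : ℝ) * π / ℓ + (n : ℝ) ^ (-a))

section Helpers
open Finset

lemma telescope_cos (c x : ℝ) (J : ℕ) :
    2 * Real.sin x * ∑ j ∈ Finset.range J, Real.cos (c + 2 * j * x)
      = Real.sin (c + (2 * J - 1) * x) - Real.sin (c - x) := by
  induction J with
  | zero =>
    simp only [Finset.range_zero, Finset.sum_empty, mul_zero, Nat.cast_zero]
    rw [show c + ((0:ℝ) - 1) * x = c - x by ring]
    ring
  | succ J ih =>
    rw [Finset.sum_range_succ, mul_add, ih]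
    push_cast
    rw [show c + (2*((J:ℝ)+1) - 1)*x = (c + 2*(J:ℝ)*x) + x by ring,
        show c + (2*(J:ℝ)-1)*x = (c + 2*(J:ℝ)*x) - x by ring,
        Real.sin_add, Real.sin_sub]
    ring

lemma cos_sum_bound (c x : ℝ) (hx : Real.sin x ≠ 0) (J : ℕ) :
    |∑ j ∈ Finset.range J, Real.cos (c + 2 * j * x)| ≤ 1 / |Real.sin x| := by
  have h := telescope_cos c x J
  have h2 : |2 * Real.sin x * ∑ j ∈ Finset.range J, Real.cos (c + 2 * j * x)| ≤ 2 := by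
    rw [h]
    calc |Real.sin (c + (2 * J - 1) * x) - Real.sin (c - x)|
        ≤ |Real.sin (c + (2 * J - 1) * x)| + |Real.sin (c - x)| := abs_sub _ _
      _ ≤ 1 + 1 := add_le_add (Real.abs_sin_le_one _) (Real.abs_sin_le_one _)
      _ = 2 := by norm_num
  rw [abs_mul, abs_mul, abs_two] at h2
  rw [le_div_iff₀ (abs_pos.2 hx)]
  nlinarith [abs_nonneg (∑ j ∈ Finset.range J, Real.cos (c + 2 * j * x)), abs_pos.2 hx]

lemma abel_bound (b c : ℕ → ℝ) (M : ℝ) (N : ℕ)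
    (h : ∀ T, T ≤ N → |∑ t ∈ Finset.range T, c t| ≤ M) :
    |∑ t ∈ Finset.range N, b t * c t|
      ≤ M * (|b (N - 1)| + ∑ t ∈ Finset.range (N - 1), |b (t + 1) - b t|) := by
  have hM : 0 ≤ M := le_trans (abs_nonneg _) (h 0 (Nat.zero_le _))
  rcases Nat.eq_zero_or_pos N with hN | hN
  · subst hN; simp; positivity
  have key := Finset.sum_range_by_parts b c N
  simp only [smul_eq_mul] at key
  rw [key]
  calc |b (N-1) * ∑ t ∈ Finset.range N, c t
        - ∑ t ∈ Finset.range (N-1), (b (t+1) - b t) * ∑ j ∈ Finset.range (t+1), c j|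
      ≤ |b (N-1) * ∑ t ∈ Finset.range N, c t|
        + |∑ t ∈ Finset.range (N-1), (b (t+1) - b t) * ∑ j ∈ Finset.range (t+1), c j| :=
        abs_sub _ _
    _ ≤ |b (N-1)| * M + ∑ t ∈ Finset.range (N-1), |b (t+1) - b t| * M := by
        gcongr ?_ + ?_
        · rw [abs_mul]; exact mul_le_mul_of_nonneg_left (h N le_rfl) (abs_nonneg _)
        · refine le_trans (Finset.abs_sum_le_sum_abs _ _) ?_
          apply Finset.sum_le_sum
          intro t ht
          rw [abs_mul]
          exact mul_le_mul_of_nonneg_left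
            (h (t+1) (by simp at ht; omega)) (abs_nonneg _)
    _ = M * (|b (N-1)| + ∑ t ∈ Finset.range (N-1), |b (t+1) - b t|) := by
        rw [← Finset.sum_mul]; ring

lemma block_sum (f : ℕ → ℝ) (ℓ m : ℕ) :
    ∑ j ∈ Finset.range m, ∑ k ∈ Finset.range ℓ, f (ℓ * j + k)
      = ∑ t ∈ Finset.range (ℓ * m), f t := by
  induction m with
  | zero => simp
  | succ m ih =>
    rw [Finset.sum_range_succ, ih, Nat.mul_succ, Finset.sum_range_add]

lemma sum_range_sq_cast (m : ℕ) :
    6 * ∑ j ∈ Finset.range m, (j:ℝ)^2 = m * (m - 1) * (2*m - 1) := by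
  induction m with
  | zero => simp
  | succ m ih => rw [Finset.sum_range_succ, mul_add, ih]; push_cast; ring

lemma sum_range_id_cast (m : ℕ) :
    2 * ∑ j ∈ Finset.range m, (j:ℝ) = m * (m - 1) := by
  induction m with
  | zero => simp
  | succ m ih => rw [Finset.sum_range_succ, mul_add, ih]; push_cast; ring

lemma sq_expand (A B x : ℝ) :
    (A * Real.sin (A*x) + B * Real.sin (B*x))^2
      = A^2 * Real.sin (A*x)^2 + B^2 * Real.sin (B*x)^2
        + A*B*(Real.cos ((B-A)*x) - Real.cos ((B+A)*x)) := by
  rw [Real.cos_sub_cos]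
  rw [show ((B-A)*x + (B+A)*x)/2 = B*x by ring,
      show ((B-A)*x - (B+A)*x)/2 = -(A*x) by ring, Real.sin_neg]
  ring
lemma sin_mul_lb (ℓ : ℕ) (hℓ : 1 ≤ ℓ) (x ε : ℝ) (hx0 : 0 ≤ x) (hx2 : x ≤ π / 2)
    (hε : 0 ≤ ε) (hsmall : ℓ * ε ≤ π / 2)
    (hF : ∀ i : ℕ, i ≤ ℓ / 2 → ε < |x - (i:ℝ) * π / ℓ|) :
    2 / π * (ℓ * ε) ≤ |Real.sin (ℓ * x)| := by
  have hπ : (0:ℝ) < π := Real.pi_pos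
  set F : ℕ := ℓ / 2 with hFdef
  have hℓR : (1:ℝ) ≤ (ℓ:ℝ) := by exact_mod_cast hℓ
  have hℓ0 : (0:ℝ) < (ℓ:ℝ) := by linarith
  set i : ℤ := round ((ℓ:ℝ) * x / π) with hi
  have hround : |(ℓ:ℝ) * x / π - i| ≤ 1/2 := abs_sub_round _
  have hi0 : 0 ≤ i := by
    by_contra h
    push_neg at h
    have : (i:ℝ) ≤ -1 := by exact_mod_cast Int.le_sub_one_of_lt h
    have hy : 0 ≤ (ℓ:ℝ) * x / π := by positivity
    have := abs_le.1 hround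
    linarith [this.2]
  set u : ℝ := (ℓ:ℝ) * x - i * π with hu
  have hufact : u = π * ((ℓ:ℝ) * x / π - i) := by field_simp [hu]; ring
  have hd2 : |u| ≤ π / 2 := by
    rw [hufact, abs_mul, abs_of_pos hπ]
    calc π * |(ℓ:ℝ) * x / π - i| ≤ π * (1/2) :=
          mul_le_mul_of_nonneg_left hround hπ.le
      _ = π / 2 := by ring
  have hdlb : ℓ * ε ≤ |u| := by
    by_cases hcase : i ≤ (F : ℕ)
    · have hit : i.toNat ≤ F := by omega
      have h1 := hF i.toNat (by omega)
      have hcast : ((i.toNat : ℕ) : ℝ) = (i : ℝ) := by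
        exact_mod_cast Int.toNat_of_nonneg hi0
      rw [hcast] at h1
      have heq : (ℓ:ℝ) * |x - (i:ℝ) * π / ℓ| = |u| := by
        rw [← abs_of_pos hℓ0, ← abs_mul, hu]
        congr 1
        field_simp
        simp only [abs_of_pos hℓ0]; ring
      nlinarith
    · push_neg at hcase
      have hZ : ((F:ℕ) : ℤ) + 1 ≤ i := by omega
      have h2 : ((ℓ:ℝ) - 1) / 2 ≤ ((F:ℕ) : ℝ) := by
        have hz : (ℓ:ℤ) - 1 ≤ 2 * ((F:ℕ) : ℤ) := by omega
        have := (@Int.cast_le ℝ _ _ _).2 hz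
        push_cast at this
        linarith
      have hiR : ((ℓ:ℝ) + 1) / 2 ≤ (i:ℝ) := by
        have := (@Int.cast_le ℝ _ _ _).2 hZ
        push_cast at this
        linarith
      have hle : (ℓ:ℝ) * x ≤ (i:ℝ) * π := by
        calc (ℓ:ℝ) * x ≤ ℓ * (π/2) := mul_le_mul_of_nonneg_left hx2 hℓ0.le
          _ ≤ (i:ℝ) * π := by nlinarith
      have : π / 2 ≤ |u| := by
        rw [hu, abs_sub_comm, abs_of_nonneg (by linarith)]
        nlinarith
      linarith
  have habs : |Real.sin ((ℓ:ℝ) * x)| = |Real.sin u| := by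
    have h := Real.sin_add_int_mul_pi u i
    rw [hu, sub_add_cancel] at h
    rw [h, abs_mul]
    have : |((-1:ℝ)) ^ i| = 1 := by
      rcases Int.even_or_odd i with he | ho
      · rw [he.neg_one_zpow]; simp
      · rw [Odd.neg_one_zpow ho]; simp
    rw [this, one_mul]
  have hsinabs : Real.sin |u| = |Real.sin u| := by
    rcases le_or_gt 0 u with h | h
    · rw [abs_of_nonneg h, abs_of_nonneg]
      exact Real.sin_nonneg_of_nonneg_of_le_pi h (by rw [abs_of_nonneg h] at hd2; linarith)
    · have hle : -u ≤ π := by rw [abs_of_neg h] at hd2; linarith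
      have hnn := Real.sin_nonneg_of_nonneg_of_le_pi (by linarith : (0:ℝ) ≤ -u) hle
      rw [Real.sin_neg] at hnn
      rw [abs_of_neg h, Real.sin_neg, abs_of_nonpos (by linarith)]
  rw [habs, ← hsinabs]
  calc 2 / π * ((ℓ:ℝ) * ε) ≤ 2 / π * |u| := by
        apply mul_le_mul_of_nonneg_left hdlb (by positivity)
    _ ≤ Real.sin |u| := Real.mul_le_sin (abs_nonneg _) hd2

lemma poly_est (L M u n S1 S2 : ℝ) (hL : 1 ≤ L) (hM : 1 ≤ M) (hu1 : -1 ≤ u)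
    (hu2 : u ≤ 2*L-2) (hn : n = 2*L*M + u) (hn1 : 1 ≤ n) (hLn : L ≤ n)
    (hS1 : 2*S1 = M*(M-1)) (hS2 : 6*S2 = M*(M-1)*(2*M-1)) :
    |L*n*S1 - L^2*S2 - n^3/(12*L)| ≤ 6*n^2 := by
  have hL0 : (0:ℝ) < L := by linarith
  have e1 : S1 = M*(M-1)/2 := by linarith
  have e2 : S2 = M*(M-1)*(2*M-1)/6 := by linarith
  set h : ℝ := L*M with hh
  have hP1 : 1 ≤ h := by nlinarith
  have hPn : h ≤ n := by nlinarith
  have key : L*n*S1 - L^2*S2 - n^3/(12*L)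
      = (-(6*u+6*L)*h^2 - (6*u*L+2*L^2+6*u^2)*h - u^3)/(12*L) := by
    rw [e1, e2, hn, hh]
    field_simp
    ring
  rw [key, abs_div, abs_of_pos (by linarith : (0:ℝ) < 12*L), div_le_iff₀ (by linarith)]
  have hh2 : h^2 ≤ n^2 := by nlinarith
  have c1a : 0 ≤ 6*u+6*L := by linarith
  have c1b : 6*u+6*L ≤ 18*L := by linarith
  have t1 : (6*u+6*L)*h^2 ≤ 18*L*n^2 := by
    nlinarith [mul_le_mul_of_nonneg_left hh2 c1a, mul_le_mul_of_nonneg_right c1b (sq_nonneg n)]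
  have c2a : 0 ≤ 6*u*L+2*L^2+6*u^2 := by nlinarith [sq_nonneg (2*u+L), sq_nonneg L]
  have c2b : 6*u*L+2*L^2+6*u^2 ≤ 38*L^2 := by nlinarith [sq_nonneg (2*L-u), sq_nonneg (2*L+u)]
  have t2 : (6*u*L+2*L^2+6*u^2)*h ≤ 38*L*n^2 := by
    have s1 : (6*u*L+2*L^2+6*u^2)*h ≤ 38*L^2*h :=
      mul_le_mul_of_nonneg_right c2b (by linarith)
    have s2 : 38*L^2*h ≤ 38*L^2*n :=
      mul_le_mul_of_nonneg_left hPn (by positivity)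
    have s3 : 38*L*n*L ≤ 38*L*n*n :=
      mul_le_mul_of_nonneg_left hLn (by positivity)
    nlinarith [s1, s2, s3]
  have hu' : |u| ≤ 2*L := abs_le.2 ⟨by linarith, by linarith⟩
  have t3 : |u^3| ≤ 8*L*n^2 := by
    have h1 : |u^3| = |u|^3 := by rw [abs_pow]
    have h2 : |u|^3 ≤ (2*L)^3 := pow_le_pow_left₀ (abs_nonneg u) hu' 3
    have hL2 : L^2 ≤ n^2 := by nlinarith [mul_self_le_mul_self (by linarith : (0:ℝ) ≤ L) hLn]
    have h3 : (2*L)^3 ≤ 8*L*n^2 := by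
      nlinarith [mul_le_mul_of_nonneg_left hL2 (show (0:ℝ) ≤ 8*L by linarith)]
    linarith [h1 ▸ h2]
  have tri : |(-(6*u+6*L)*h^2 - (6*u*L+2*L^2+6*u^2)*h - u^3)|
      ≤ (6*u+6*L)*h^2 + (6*u*L+2*L^2+6*u^2)*h + |u^3| := by
    rw [abs_le]
    constructor
    · nlinarith [neg_abs_le (u^3), le_abs_self (u^3), abs_nonneg (u^3)]
    · nlinarith [neg_abs_le (u^3), le_abs_self (u^3), abs_nonneg (u^3)]
  have hpos : (0:ℝ) ≤ L*n^2 := by positivity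
  linarith [tri, t1, t2, t3, hpos]

end Helpers

/-- With `n = 2ℓm + r`, on `E_ℓ(n)` the quantity
`C_n(x) = Σ_{j<m} Σ_{k<ℓ} ((ℓj+k) sin((ℓj+k)x) + (n−ℓ+1−ℓj+k) sin((n−ℓ+1−ℓj+k)x))²
  + Σ_{i≤r} (ℓm+i)² sin²((ℓm+i)x)`
equals `n³(2 − u_ℓ(x) cos(nx))/12 + O(n^{2+a})`. -/
theorem C_asymptotics (ℓ : ℕ) (hℓ : 1 ≤ ℓ) (r : ℤ) (hr1 : -1 ≤ r) (hr2 : r ≤ 2 * ℓ - 2)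
    (a : ℝ) (ha : a ∈ Set.Ioo (0:ℝ) (1/2)) :
    ∃ C > 0, ∃ N : ℕ, ∀ m n : ℕ, (n : ℤ) = 2 * ℓ * m + r → N ≤ n →
      ∀ x ∈ ESet ℓ a n,
      |(∑ j ∈ Finset.range m, ∑ k ∈ Finset.range ℓ,
            (((ℓ * j + k : ℕ) : ℝ) * Real.sin (((ℓ * j + k : ℕ) : ℝ) * x)
              + ((n - ℓ + 1 - ℓ * j + k : ℕ) : ℝ)
                  * Real.sin (((n - ℓ + 1 - ℓ * j + k : ℕ) : ℝ) * x)) ^ 2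
          + ∑ i ∈ Finset.range (r + 1).toNat,
              ((ℓ * m + i : ℕ) : ℝ) ^ 2 * Real.sin (((ℓ * m + i : ℕ) : ℝ) * x) ^ 2)
        - (n : ℝ) ^ 3 * (2 - uFun ℓ x * Real.cos (n * x)) / 12|
      ≤ C * (n : ℝ) ^ ((2 : ℝ) + a) := by
  obtain ⟨ha1, ha2⟩ := ha
  have hπ : (0:ℝ) < π := Real.pi_pos
  -- choose N₀ such that ℓ * n^(-a) ≤ π/2 for n ≥ N₀
  obtain ⟨N0, hN0⟩ : ∃ N0 : ℕ, ∀ n : ℕ, N0 ≤ n → (ℓ:ℝ) * (n:ℝ)^(-a) ≤ π/2 := by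
    have h1 : Filter.Tendsto (fun x:ℝ => x^(-a)) Filter.atTop (nhds 0) :=
      tendsto_rpow_neg_atTop ha1
    have h2 : Filter.Tendsto (fun n:ℕ => ((n:ℝ))^(-a)) Filter.atTop (nhds 0) :=
      h1.comp tendsto_natCast_atTop_atTop
    have h3 : Filter.Tendsto (fun n:ℕ => (ℓ:ℝ) * ((n:ℝ))^(-a)) Filter.atTop (nhds 0) := by
      simpa using h2.const_mul (ℓ:ℝ)
    have h4 := h3.eventually (gt_mem_nhds (show (0:ℝ) < π/2 by positivity))
    obtain ⟨N0, hN0⟩ := Filter.eventually_atTop.1 h4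
    exact ⟨N0, fun n hn => (hN0 n hn).le⟩
  refine ⟨4*ℓ + 30, by positivity, max N0 (2*ℓ+2), ?_⟩
  intro m n hn hN x hx
  have hnN0 : N0 ≤ n := le_trans (le_max_left _ _) hN
  have hn2ℓ : 2*ℓ+2 ≤ n := le_trans (le_max_right _ _) hN
  set R : ℕ := (r+1).toNat with hRdef
  have hRz : (R:ℤ) = r + 1 := Int.toNat_of_nonneg (by linarith)
  have hPZ : ((ℓ*m : ℕ):ℤ) = (ℓ:ℤ)*(m:ℤ) := by push_cast; ring
  have hnZ : (n:ℤ) = 2*((ℓ*m:ℕ):ℤ) + r := by rw [hPZ]; linarith [hn]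
  have hnP : n + 1 = 2*(ℓ*m) + R := by omega
  have hR2 : R ≤ 2*ℓ - 1 := by omega
  have hm1 : 1 ≤ m := by
    by_contra h
    push_neg at h
    interval_cases m
    simp at hnP
    omega
  have hℓn : ℓ ≤ n := by omega
  have hPn : ℓ*m ≤ n := by
    have h2 : 2*(ℓ*m) ≤ n + 1 := by omega
    omega
  have hℓP : ℓ ≤ ℓ*m := by
    calc ℓ = ℓ*1 := by ring
    _ ≤ ℓ*m := Nat.mul_le_mul_left ℓ hm1
  -- real basics
  have hn1R : (1:ℝ) ≤ (n:ℝ) := by exact_mod_cast (by omega : 1 ≤ n)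
  have hn0R : (0:ℝ) < (n:ℝ) := by linarith
  have hℓ1R : (1:ℝ) ≤ (ℓ:ℝ) := by exact_mod_cast hℓ
  set ε : ℝ := (n:ℝ)^(-a) with hεdef
  set εa : ℝ := (n:ℝ)^a with hεadef
  have hεa0 : 0 < εa := Real.rpow_pos_of_pos hn0R a
  have hε0 : 0 < ε := Real.rpow_pos_of_pos hn0R _
  have hεεa : ε = εa⁻¹ := by rw [hεdef, hεadef, Real.rpow_neg hn0R.le]
  have hεa1 : (1:ℝ) ≤ εa := Real.one_le_rpow hn1R ha1.le
  -- facts about x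
  obtain ⟨⟨hx0, hx2⟩, hxU⟩ := hx
  have hF : ∀ i : ℕ, i ≤ ℓ/2 → ε < |x - (i:ℝ)*π/ℓ| := by
    intro i hi
    by_contra hcon
    push_neg at hcon
    apply hxU
    have h := abs_le.1 hcon
    simp only [Set.mem_iUnion, Set.mem_Icc, Finset.mem_range]
    exact ⟨i, by omega, by linarith [h.2], by linarith [h.1]⟩
  have hεx : ε < x := by
    have h := hF 0 (by omega)
    simp only [Nat.cast_zero, zero_mul, zero_div, sub_zero] at h
    rwa [abs_of_nonneg hx0] at h
  have hsmall : (ℓ:ℝ) * ε ≤ π/2 := hN0 n hnN0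
  have hxπ : x < π := by linarith
  have hsinx_pos : 0 < Real.sin x := Real.sin_pos_of_pos_of_lt_pi (by linarith) hxπ
  have hsinx_ne : Real.sin x ≠ 0 := ne_of_gt hsinx_pos
  have hsx : 2/π * ε ≤ Real.sin x := by
    have h1 : 2/π * x ≤ Real.sin x := Real.mul_le_sin hx0 hx2
    have h2 : 2/π * ε ≤ 2/π * x := by
      apply mul_le_mul_of_nonneg_left hεx.le (by positivity)
    linarith
  have hsl : 2/π * ((ℓ:ℝ) * ε) ≤ |Real.sin ((ℓ:ℝ)*x)| :=
    sin_mul_lb ℓ hℓ x ε hx0 hx2 hε0.le hsmall hF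
  have hsinlx_ne : Real.sin ((ℓ:ℝ)*x) ≠ 0 := by
    intro h
    rw [h, abs_zero] at hsl
    have : 0 < 2/π*((ℓ:ℝ)*ε) := by positivity
    linarith
  have hsx_inv : 1 / Real.sin x ≤ π/2 * εa := by
    have h1 : 1 / Real.sin x ≤ 1 / (2/π * ε) := by
      apply one_div_le_one_div_of_le (by positivity) hsx
    have h2 : 1 / (2/π * ε) = π/2 * εa := by
      rw [hεεa]
      field_simp
    linarith
  have hsl_inv : 1 / |Real.sin ((ℓ:ℝ)*x)| ≤ π/2 * εa / ℓ := by
    have h1 : 1 / |Real.sin ((ℓ:ℝ)*x)| ≤ 1 / (2/π * ((ℓ:ℝ) * ε)) := by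
      apply one_div_le_one_div_of_le (by positivity) hsl
    have h2 : 1 / (2/π * ((ℓ:ℝ) * ε)) = π/2 * εa / ℓ := by
      rw [hεεa]
      field_simp
    linarith
  -- index cast facts
  have hjR : ∀ j, j < m → (ℓ:ℝ)*(j:ℝ) + (ℓ:ℝ) ≤ (n:ℝ) := by
    intro j hj
    have h1 : ℓ*j + ℓ ≤ ℓ*m := by
      have h2 : ℓ*(j+1) ≤ ℓ*m := Nat.mul_le_mul_left ℓ (by omega)
      rw [Nat.mul_succ] at h2
      exact h2
    have h3 : ℓ*j + ℓ ≤ n := le_trans h1 hPn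
    have h4 : ((ℓ*j + ℓ : ℕ):ℝ) ≤ (n:ℝ) := by exact_mod_cast h3
    push_cast at h4
    linarith
  have hkR : ∀ k, k < ℓ → (k:ℝ) ≤ (ℓ:ℝ) - 1 := by
    intro k hk
    have : (k:ℝ) + 1 ≤ (ℓ:ℝ) := by exact_mod_cast hk
    linarith
  have hq_cast : ∀ j, j < m → ∀ k, k < ℓ →
      ((n - ℓ + 1 - ℓ*j + k : ℕ):ℝ) = (n:ℝ)+1-(ℓ:ℝ)-(ℓ:ℝ)*(j:ℝ)+(k:ℝ) := by
    intro j hj k hk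
    have h1 : ℓ*j + ℓ ≤ ℓ*m := by
      have h2 : ℓ*(j+1) ≤ ℓ*m := Nat.mul_le_mul_left ℓ (by omega)
      rw [Nat.mul_succ] at h2
      exact h2
    have hZ : ((n - ℓ + 1 - ℓ*j + k : ℕ):ℤ) = (n:ℤ)+1-(ℓ:ℤ)-((ℓ*j:ℕ):ℤ)+(k:ℤ) := by
      have h2 := hnP
      revert h1 h2
      generalize ℓ*j = A
      generalize ℓ*m = P
      intro h1 h2
      omega
    have := congrArg (fun z : ℤ => (z:ℝ)) hZ
    push_cast at this
    push_cast
    linarith [this]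
  have hq_nat : ∀ j, j < m → ∀ k, k < ℓ →
      n - ℓ + 1 - ℓ*j + k = (ℓ*m + R) + (ℓ*(m-1-j)+k) := by
    intro j hj k hk
    have h1 : ℓ*j + ℓ*(m-1-j) + ℓ = ℓ*m := by
      have h0 : j + (m-1-j) + 1 = m := by omega
      calc ℓ*j + ℓ*(m-1-j) + ℓ = ℓ*(j + (m-1-j) + 1) := by ring
      _ = ℓ*m := by rw [h0]
    have h2 := hnP
    revert h1 h2
    generalize ℓ*j = A
    generalize ℓ*(m-1-j) = B
    generalize ℓ*m = P
    intro h1 h2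
    omega
  -- the splitting of the double sum
  have hsplit : (∑ j ∈ Finset.range m, ∑ k ∈ Finset.range ℓ,
        (((ℓ * j + k : ℕ) : ℝ) * Real.sin (((ℓ * j + k : ℕ) : ℝ) * x)
          + ((n - ℓ + 1 - ℓ * j + k : ℕ) : ℝ)
              * Real.sin (((n - ℓ + 1 - ℓ * j + k : ℕ) : ℝ) * x)) ^ 2)
      = ((∑ j ∈ Finset.range m, ∑ k ∈ Finset.range ℓ,
          (((ℓ * j + k : ℕ) : ℝ)^2 * Real.sin (((ℓ * j + k : ℕ) : ℝ) * x)^2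
            + ((n - ℓ + 1 - ℓ * j + k : ℕ) : ℝ)^2
                * Real.sin (((n - ℓ + 1 - ℓ * j + k : ℕ) : ℝ) * x)^2))
        + ∑ j ∈ Finset.range m, ∑ k ∈ Finset.range ℓ,
            (((ℓ:ℝ)*(j:ℝ)+(k:ℝ)) * ((n:ℝ)+1-(ℓ:ℝ)-(ℓ:ℝ)*(j:ℝ)+(k:ℝ)))
              * (Real.cos (((n:ℝ)+1-(ℓ:ℝ)-2*(ℓ:ℝ)*(j:ℝ)) * x)
                  - Real.cos (((n:ℝ)+1-(ℓ:ℝ)+2*(k:ℝ)) * x))) := by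
    rw [← Finset.sum_add_distrib]
    apply Finset.sum_congr rfl
    intro j hj
    rw [← Finset.sum_add_distrib]
    apply Finset.sum_congr rfl
    intro k hk
    have hp : ((ℓ * j + k : ℕ) : ℝ) = (ℓ:ℝ)*(j:ℝ)+(k:ℝ) := by push_cast; ring
    have hq := hq_cast j (Finset.mem_range.1 hj) k (Finset.mem_range.1 hk)
    rw [hp, hq, sq_expand]
    rw [show ((n:ℝ)+1-(ℓ:ℝ)-(ℓ:ℝ)*(j:ℝ)+(k:ℝ)) - ((ℓ:ℝ)*(j:ℝ)+(k:ℝ))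
          = (n:ℝ)+1-(ℓ:ℝ)-2*(ℓ:ℝ)*(j:ℝ) by ring,
        show ((n:ℝ)+1-(ℓ:ℝ)-(ℓ:ℝ)*(j:ℝ)+(k:ℝ)) + ((ℓ:ℝ)*(j:ℝ)+(k:ℝ))
          = (n:ℝ)+1-(ℓ:ℝ)+2*(k:ℝ) by ring]
  -- diagonal identity
  have hSg1 : (∑ j ∈ Finset.range m, ∑ k ∈ Finset.range ℓ,
        ((ℓ * j + k : ℕ) : ℝ)^2 * Real.sin (((ℓ * j + k : ℕ) : ℝ) * x)^2)
      = ∑ t ∈ Finset.range (ℓ*m), ((t:ℕ):ℝ)^2 * Real.sin (((t:ℕ):ℝ) * x)^2 :=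
    block_sum (fun t => ((t:ℕ):ℝ)^2 * Real.sin (((t:ℕ):ℝ) * x)^2) ℓ m
  have hSg2 : (∑ j ∈ Finset.range m, ∑ k ∈ Finset.range ℓ,
        ((n - ℓ + 1 - ℓ * j + k : ℕ) : ℝ)^2 * Real.sin (((n - ℓ + 1 - ℓ * j + k : ℕ) : ℝ) * x)^2)
      = ∑ t ∈ Finset.range (ℓ*m),
          (((ℓ*m + R + t : ℕ)) : ℝ)^2 * Real.sin ((((ℓ*m + R + t : ℕ)) : ℝ) * x)^2 := by
    have e1 : (∑ j ∈ Finset.range m, ∑ k ∈ Finset.range ℓ,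
          ((n - ℓ + 1 - ℓ * j + k : ℕ) : ℝ)^2
            * Real.sin (((n - ℓ + 1 - ℓ * j + k : ℕ) : ℝ) * x)^2)
        = ∑ j ∈ Finset.range m, ∑ k ∈ Finset.range ℓ,
          ((ℓ*m + R + (ℓ*(m-1-j)+k) : ℕ) : ℝ)^2
            * Real.sin (((ℓ*m + R + (ℓ*(m-1-j)+k) : ℕ) : ℝ) * x)^2 := by
      apply Finset.sum_congr rfl
      intro j hj
      apply Finset.sum_congr rfl
      intro k hk
      rw [hq_nat j (Finset.mem_range.1 hj) k (Finset.mem_range.1 hk)]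
    have e2 : (∑ j ∈ Finset.range m, ∑ k ∈ Finset.range ℓ,
          ((ℓ*m + R + (ℓ*(m-1-j)+k) : ℕ) : ℝ)^2
            * Real.sin (((ℓ*m + R + (ℓ*(m-1-j)+k) : ℕ) : ℝ) * x)^2)
        = ∑ j ∈ Finset.range m, ∑ k ∈ Finset.range ℓ,
          ((ℓ*m + R + (ℓ*j+k) : ℕ) : ℝ)^2
            * Real.sin (((ℓ*m + R + (ℓ*j+k) : ℕ) : ℝ) * x)^2 :=
      Finset.sum_range_reflect (fun j' => ∑ k ∈ Finset.range ℓ,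
        ((ℓ*m + R + (ℓ*j'+k) : ℕ) : ℝ)^2
          * Real.sin (((ℓ*m + R + (ℓ*j'+k) : ℕ) : ℝ) * x)^2) m
    have e3 : (∑ j ∈ Finset.range m, ∑ k ∈ Finset.range ℓ,
          ((ℓ*m + R + (ℓ*j+k) : ℕ) : ℝ)^2
            * Real.sin (((ℓ*m + R + (ℓ*j+k) : ℕ) : ℝ) * x)^2)
        = ∑ t ∈ Finset.range (ℓ*m),
            ((ℓ*m + R + t : ℕ) : ℝ)^2 * Real.sin (((ℓ*m + R + t : ℕ) : ℝ) * x)^2 :=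
      block_sum (fun t => ((ℓ*m + R + t : ℕ) : ℝ)^2
        * Real.sin (((ℓ*m + R + t : ℕ) : ℝ) * x)^2) ℓ m
    rw [e1, e2, e3]
  have hdiag : (∑ t ∈ Finset.range (ℓ*m), ((t:ℕ):ℝ)^2 * Real.sin (((t:ℕ):ℝ) * x)^2)
      + (∑ i ∈ Finset.range R, ((ℓ * m + i : ℕ) : ℝ) ^ 2 * Real.sin (((ℓ * m + i : ℕ) : ℝ) * x) ^ 2)
      + (∑ t ∈ Finset.range (ℓ*m),
          ((ℓ*m + R + t : ℕ) : ℝ)^2 * Real.sin (((ℓ*m + R + t : ℕ) : ℝ) * x)^2)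
      = ∑ t ∈ Finset.range (n+1), ((t:ℕ):ℝ)^2 * Real.sin (((t:ℕ):ℝ) * x)^2 := by
    have a1 := Finset.sum_range_add (fun t => ((t:ℕ):ℝ)^2 * Real.sin (((t:ℕ):ℝ) * x)^2) (ℓ*m) R
    have a2 := Finset.sum_range_add (fun t => ((t:ℕ):ℝ)^2 * Real.sin (((t:ℕ):ℝ) * x)^2) (ℓ*m+R) (ℓ*m)
    have a3 : (ℓ*m+R)+(ℓ*m) = n+1 := by omega
    rw [a3] at a2
    rw [a2, a1]
  -- diagonal estimates
  have hD1 : (∑ t ∈ Finset.range (n+1), ((t:ℕ):ℝ)^2 * Real.sin (((t:ℕ):ℝ) * x)^2)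
      = (∑ t ∈ Finset.range (n+1), ((t:ℕ):ℝ)^2)/2
        - (∑ t ∈ Finset.range (n+1), ((t:ℕ):ℝ)^2 * Real.cos (2*((t:ℕ):ℝ)*x))/2 := by
    rw [Finset.sum_div, Finset.sum_div, ← Finset.sum_sub_distrib]
    apply Finset.sum_congr rfl
    intro t ht
    have h := Real.sin_sq_eq_half_sub (((t:ℕ):ℝ)*x)
    rw [← mul_assoc] at h
    rw [h]
    ring
  have hsq : 6 * ∑ t ∈ Finset.range (n+1), ((t:ℕ):ℝ)^2
      = ((n:ℝ)+1)*(n:ℝ)*(2*(n:ℝ)+1) := by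
    have h := sum_range_sq_cast (n+1)
    push_cast at h
    linear_combination h
  have hnn : (n:ℝ) ≤ (n:ℝ)^2 := by nlinarith
  have hmean : |(∑ t ∈ Finset.range (n+1), ((t:ℕ):ℝ)^2)/2 - (n:ℝ)^3/6| ≤ (n:ℝ)^2 := by
    rw [abs_le]
    constructor
    · nlinarith [hsq]
    · nlinarith [hsq]
  have hpartial : ∀ T, T ≤ n+1 → |∑ t ∈ Finset.range T, Real.cos (0 + 2*((t:ℕ):ℝ)*x)| ≤ π/2 * εa := by
    intro T _
    refine le_trans (cos_sum_bound 0 x hsinx_ne T) ?_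
    rw [abs_of_pos hsinx_pos]
    exact hsx_inv
  have hosc : |∑ t ∈ Finset.range (n+1), ((t:ℕ):ℝ)^2 * Real.cos (2*((t:ℕ):ℝ)*x)|
      ≤ (π/2 * εa) * (2*(n:ℝ)^2) := by
    have habel := abel_bound (fun t => ((t:ℕ):ℝ)^2) (fun t => Real.cos (0 + 2*((t:ℕ):ℝ)*x))
      (π/2 * εa) (n+1) hpartial
    simp only [zero_add] at habel
    have hb1 : (((n+1-1 : ℕ)):ℝ)^2 = (n:ℝ)^2 := by norm_num
    have hvar : ∑ t ∈ Finset.range (n+1-1), |(((t+1:ℕ)):ℝ)^2 - ((t:ℕ):ℝ)^2| = (n:ℝ)^2 := by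
      have e : ∀ t ∈ Finset.range n, |(((t+1:ℕ)):ℝ)^2 - ((t:ℕ):ℝ)^2| = 2*(t:ℝ)+1 := by
        intro t ht
        have : (((t+1:ℕ)):ℝ)^2 - ((t:ℕ):ℝ)^2 = 2*(t:ℝ)+1 := by push_cast; ring
        rw [this, abs_of_nonneg (by positivity)]
      rw [show n+1-1 = n from rfl, Finset.sum_congr rfl e]
      rw [Finset.sum_add_distrib, ← Finset.mul_sum, Finset.sum_const, Finset.card_range]
      simp only [nsmul_eq_mul, mul_one]
      have h2 := sum_range_id_cast n
      nlinarith [h2]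
    rw [hb1, hvar] at habel
    calc |∑ t ∈ Finset.range (n+1), ((t:ℕ):ℝ)^2 * Real.cos (2*((t:ℕ):ℝ)*x)|
        ≤ π/2 * εa * (|(n:ℝ)^2| + (n:ℝ)^2) := habel
      _ = (π/2 * εa) * (2*(n:ℝ)^2) := by rw [abs_of_nonneg (by positivity : (0:ℝ) ≤ (n:ℝ)^2)]; ring
  -- cross term decomposition
  have hSB : (∑ j ∈ Finset.range m, ∑ k ∈ Finset.range ℓ,
        (((ℓ:ℝ)*(j:ℝ)+(k:ℝ)) * ((n:ℝ)+1-(ℓ:ℝ)-(ℓ:ℝ)*(j:ℝ)+(k:ℝ)))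
          * (Real.cos (((n:ℝ)+1-(ℓ:ℝ)-2*(ℓ:ℝ)*(j:ℝ)) * x)
              - Real.cos (((n:ℝ)+1-(ℓ:ℝ)+2*(k:ℝ)) * x)))
      = (∑ j ∈ Finset.range m,
          (∑ k ∈ Finset.range ℓ, (((ℓ:ℝ)*(j:ℝ)+(k:ℝ)) * ((n:ℝ)+1-(ℓ:ℝ)-(ℓ:ℝ)*(j:ℝ)+(k:ℝ))))
            * Real.cos (((n:ℝ)+1-(ℓ:ℝ)-2*(ℓ:ℝ)*(j:ℝ)) * x))
        - (∑ j ∈ Finset.range m, (ℓ:ℝ)*(j:ℝ)*((n:ℝ)-(ℓ:ℝ)*(j:ℝ)))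
            * (∑ k ∈ Finset.range ℓ, Real.cos (((n:ℝ)+1-(ℓ:ℝ)+2*(k:ℝ)) * x))
        - ∑ j ∈ Finset.range m, ∑ k ∈ Finset.range ℓ,
            ((((ℓ:ℝ)*(j:ℝ)+(k:ℝ)) * ((n:ℝ)+1-(ℓ:ℝ)-(ℓ:ℝ)*(j:ℝ)+(k:ℝ)))
              - (ℓ:ℝ)*(j:ℝ)*((n:ℝ)-(ℓ:ℝ)*(j:ℝ)))
              * Real.cos (((n:ℝ)+1-(ℓ:ℝ)+2*(k:ℝ)) * x) := by
    have step : ∀ j ∈ Finset.range m,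
        (∑ k ∈ Finset.range ℓ,
          (((ℓ:ℝ)*(j:ℝ)+(k:ℝ)) * ((n:ℝ)+1-(ℓ:ℝ)-(ℓ:ℝ)*(j:ℝ)+(k:ℝ)))
            * (Real.cos (((n:ℝ)+1-(ℓ:ℝ)-2*(ℓ:ℝ)*(j:ℝ)) * x)
                - Real.cos (((n:ℝ)+1-(ℓ:ℝ)+2*(k:ℝ)) * x)))
        = (∑ k ∈ Finset.range ℓ, (((ℓ:ℝ)*(j:ℝ)+(k:ℝ)) * ((n:ℝ)+1-(ℓ:ℝ)-(ℓ:ℝ)*(j:ℝ)+(k:ℝ))))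
            * Real.cos (((n:ℝ)+1-(ℓ:ℝ)-2*(ℓ:ℝ)*(j:ℝ)) * x)
          - ((ℓ:ℝ)*(j:ℝ)*((n:ℝ)-(ℓ:ℝ)*(j:ℝ)))
              * (∑ k ∈ Finset.range ℓ, Real.cos (((n:ℝ)+1-(ℓ:ℝ)+2*(k:ℝ)) * x))
          - ∑ k ∈ Finset.range ℓ,
              ((((ℓ:ℝ)*(j:ℝ)+(k:ℝ)) * ((n:ℝ)+1-(ℓ:ℝ)-(ℓ:ℝ)*(j:ℝ)+(k:ℝ)))
                - (ℓ:ℝ)*(j:ℝ)*((n:ℝ)-(ℓ:ℝ)*(j:ℝ)))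
                * Real.cos (((n:ℝ)+1-(ℓ:ℝ)+2*(k:ℝ)) * x) := by
      intro j hj
      rw [Finset.sum_mul, Finset.mul_sum, ← Finset.sum_sub_distrib, ← Finset.sum_sub_distrib]
      apply Finset.sum_congr rfl
      intro k hk
      ring
    rw [Finset.sum_congr rfl step, Finset.sum_sub_distrib, Finset.sum_sub_distrib,
        ← Finset.sum_mul]
  -- pointwise bounds on the products
  have hPFfacts : ∀ j, j < m → ∀ k, k < ℓ →
      |((ℓ:ℝ)*(j:ℝ)+(k:ℝ)) * ((n:ℝ)+1-(ℓ:ℝ)-(ℓ:ℝ)*(j:ℝ)+(k:ℝ))| ≤ (n:ℝ)^2 ∧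
      |(((ℓ:ℝ)*(j:ℝ)+(k:ℝ)) * ((n:ℝ)+1-(ℓ:ℝ)-(ℓ:ℝ)*(j:ℝ)+(k:ℝ)))
        - (ℓ:ℝ)*(j:ℝ)*((n:ℝ)-(ℓ:ℝ)*(j:ℝ))| ≤ 4*(ℓ:ℝ)*(n:ℝ) := by
    intro j hj k hk
    have h1 := hjR j hj
    have h2 := hkR k hk
    have hj0 : (0:ℝ) ≤ (j:ℝ) := Nat.cast_nonneg j
    have hk0 : (0:ℝ) ≤ (k:ℝ) := Nat.cast_nonneg k
    have hℓj0 : (0:ℝ) ≤ (ℓ:ℝ)*(j:ℝ) := by positivity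
    have hA0 : (0:ℝ) ≤ (ℓ:ℝ)*(j:ℝ)+(k:ℝ) := by positivity
    have hAn : (ℓ:ℝ)*(j:ℝ)+(k:ℝ) ≤ (n:ℝ) := by linarith
    have hB0 : (0:ℝ) ≤ (n:ℝ)+1-(ℓ:ℝ)-(ℓ:ℝ)*(j:ℝ)+(k:ℝ) := by linarith
    have hBn : (n:ℝ)+1-(ℓ:ℝ)-(ℓ:ℝ)*(j:ℝ)+(k:ℝ) ≤ (n:ℝ) := by linarith
    constructor
    · rw [abs_of_nonneg (mul_nonneg hA0 hB0)]
      calc ((ℓ:ℝ)*(j:ℝ)+(k:ℝ)) * ((n:ℝ)+1-(ℓ:ℝ)-(ℓ:ℝ)*(j:ℝ)+(k:ℝ))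
          ≤ (n:ℝ) * (n:ℝ) := mul_le_mul hAn hBn hB0 hn0R.le
        _ = (n:ℝ)^2 := by ring
    · have e0 : (((ℓ:ℝ)*(j:ℝ)+(k:ℝ)) * ((n:ℝ)+1-(ℓ:ℝ)-(ℓ:ℝ)*(j:ℝ)+(k:ℝ)))
          - (ℓ:ℝ)*(j:ℝ)*((n:ℝ)-(ℓ:ℝ)*(j:ℝ))
          = (ℓ:ℝ)*(j:ℝ)*(1-(ℓ:ℝ)) + (k:ℝ)*((n:ℝ)+1-(ℓ:ℝ)) + (k:ℝ)^2 := by ring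
      rw [e0, abs_le]
      have p1 : (ℓ:ℝ)*(j:ℝ)*(ℓ:ℝ) ≤ (n:ℝ)*(ℓ:ℝ) :=
        mul_le_mul_of_nonneg_right (by linarith) (by positivity)
      have p2 : (0:ℝ) ≤ (k:ℝ)*((n:ℝ)+1-(ℓ:ℝ)) := mul_nonneg hk0 (by linarith)
      have p3 : (k:ℝ)*((n:ℝ)+1-(ℓ:ℝ)) ≤ ((ℓ:ℝ)-1)*(2*(n:ℝ)) :=
        mul_le_mul h2 (by linarith) (by linarith) (by linarith)
      have p4 : (k:ℝ)^2 ≤ ((ℓ:ℝ)-1)*((ℓ:ℝ)-1) := by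
        nlinarith only [mul_le_mul h2 h2 hk0 (le_trans hk0 h2)]
      have p5 : ((ℓ:ℝ)-1)*((ℓ:ℝ)-1) ≤ ((ℓ:ℝ)-1)*(n:ℝ) :=
        mul_le_mul_of_nonneg_left (by linarith) (by linarith)
      have q1 : (ℓ:ℝ)*(j:ℝ)*(1-(ℓ:ℝ)) ≤ 0 :=
        mul_nonpos_of_nonneg_of_nonpos hℓj0 (by linarith)
      have q2 : (0:ℝ) ≤ (ℓ:ℝ)*(n:ℝ) := by positivity
      constructor
      · linarith only [p1, p2, hℓj0, sq_nonneg ((k:ℝ)), q2, hn0R]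
      · linarith only [q1, p3, p4, p5, q2, hn0R]
  -- bounds for the Abel summation on X1
  have hbB : ∀ j, j < m →
      |∑ k ∈ Finset.range ℓ, (((ℓ:ℝ)*(j:ℝ)+(k:ℝ)) * ((n:ℝ)+1-(ℓ:ℝ)-(ℓ:ℝ)*(j:ℝ)+(k:ℝ)))|
        ≤ (ℓ:ℝ)*(n:ℝ)^2 := by
    intro j hj
    refine le_trans (Finset.abs_sum_le_sum_abs _ _) ?_
    calc ∑ k ∈ Finset.range ℓ,
          |(((ℓ:ℝ)*(j:ℝ)+(k:ℝ)) * ((n:ℝ)+1-(ℓ:ℝ)-(ℓ:ℝ)*(j:ℝ)+(k:ℝ)))|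
        ≤ ∑ _k ∈ Finset.range ℓ, (n:ℝ)^2 := by
          apply Finset.sum_le_sum
          intro k hk
          exact (hPFfacts j hj k (Finset.mem_range.1 hk)).1
      _ = (ℓ:ℝ)*(n:ℝ)^2 := by
          rw [Finset.sum_const, Finset.card_range, nsmul_eq_mul]
  have hvarB : ∀ j, j + 1 < m →
      |(∑ k ∈ Finset.range ℓ,
          (((ℓ:ℝ)*((j+1:ℕ):ℝ)+(k:ℝ)) * ((n:ℝ)+1-(ℓ:ℝ)-(ℓ:ℝ)*((j+1:ℕ):ℝ)+(k:ℝ))))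
        - ∑ k ∈ Finset.range ℓ,
            (((ℓ:ℝ)*(j:ℝ)+(k:ℝ)) * ((n:ℝ)+1-(ℓ:ℝ)-(ℓ:ℝ)*(j:ℝ)+(k:ℝ)))|
        ≤ 2*(ℓ:ℝ)^2*(n:ℝ) := by
    intro j hj
    have hjm : j < m := by omega
    have h1 := hjR j hjm
    rw [← Finset.sum_sub_distrib]
    have e : ∀ k ∈ Finset.range ℓ,
        (((ℓ:ℝ)*((j+1:ℕ):ℝ)+(k:ℝ)) * ((n:ℝ)+1-(ℓ:ℝ)-(ℓ:ℝ)*((j+1:ℕ):ℝ)+(k:ℝ)))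
          - (((ℓ:ℝ)*(j:ℝ)+(k:ℝ)) * ((n:ℝ)+1-(ℓ:ℝ)-(ℓ:ℝ)*(j:ℝ)+(k:ℝ)))
        = (ℓ:ℝ)*((n:ℝ)+1-2*(ℓ:ℝ)-2*(ℓ:ℝ)*(j:ℝ)) := by
      intro k hk
      push_cast
      ring
    rw [Finset.sum_congr rfl e, Finset.sum_const, Finset.card_range, nsmul_eq_mul]
    rw [abs_mul, abs_mul]
    have b1 : |((ℓ:ℕ):ℝ)| = (ℓ:ℝ) := abs_of_nonneg (Nat.cast_nonneg ℓ)
    have b2 : |(n:ℝ)+1-2*(ℓ:ℝ)-2*(ℓ:ℝ)*(j:ℝ)| ≤ 2*(n:ℝ) := by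
      rw [abs_le]
      have hℓj0 : (0:ℝ) ≤ (ℓ:ℝ)*(j:ℝ) := by positivity
      constructor <;> linarith only [h1, hn1R, hℓ1R, hℓj0]
    rw [b1]
    calc (ℓ:ℝ) * ((ℓ:ℝ) * |(n:ℝ)+1-2*(ℓ:ℝ)-2*(ℓ:ℝ)*(j:ℝ)|)
        ≤ (ℓ:ℝ) * ((ℓ:ℝ) * (2*(n:ℝ))) :=
          mul_le_mul_of_nonneg_left
            (mul_le_mul_of_nonneg_left b2 (Nat.cast_nonneg ℓ)) (Nat.cast_nonneg ℓ)
      _ = 2*(ℓ:ℝ)^2*(n:ℝ) := by ring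
  -- X1 bound via Abel summation
  have hPnR : (ℓ:ℝ)*(m:ℝ) ≤ (n:ℝ) := by
    have h := (Nat.cast_le (α := ℝ)).2 hPn
    push_cast at h
    linarith
  have hX1b : |∑ j ∈ Finset.range m,
      (∑ k ∈ Finset.range ℓ, (((ℓ:ℝ)*(j:ℝ)+(k:ℝ)) * ((n:ℝ)+1-(ℓ:ℝ)-(ℓ:ℝ)*(j:ℝ)+(k:ℝ))))
        * Real.cos (((n:ℝ)+1-(ℓ:ℝ)-2*(ℓ:ℝ)*(j:ℝ)) * x)|
      ≤ 6 * εa * (n:ℝ)^2 := by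
    have hpart2 : ∀ T, T ≤ m →
        |∑ j ∈ Finset.range T, Real.cos (((n:ℝ)+1-(ℓ:ℝ))*x + 2*(j:ℝ)*(-((ℓ:ℝ)*x)))|
          ≤ π/2*εa/(ℓ:ℝ) := by
      intro T _
      have hneg : Real.sin (-((ℓ:ℝ)*x)) ≠ 0 := by
        rw [Real.sin_neg]; exact neg_ne_zero.2 hsinlx_ne
      refine le_trans (cos_sum_bound _ _ hneg T) ?_
      rw [Real.sin_neg, abs_neg]
      exact hsl_inv
    have habel := abel_bound
      (fun j => ∑ k ∈ Finset.range ℓ,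
        (((ℓ:ℝ)*(j:ℝ)+(k:ℝ)) * ((n:ℝ)+1-(ℓ:ℝ)-(ℓ:ℝ)*(j:ℝ)+(k:ℝ))))
      (fun j => Real.cos (((n:ℝ)+1-(ℓ:ℝ))*x + 2*(j:ℝ)*(-((ℓ:ℝ)*x)))) (π/2*εa/(ℓ:ℝ)) m hpart2
    have hsum_eq : (∑ j ∈ Finset.range m,
        (∑ k ∈ Finset.range ℓ, (((ℓ:ℝ)*(j:ℝ)+(k:ℝ)) * ((n:ℝ)+1-(ℓ:ℝ)-(ℓ:ℝ)*(j:ℝ)+(k:ℝ))))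
          * Real.cos (((n:ℝ)+1-(ℓ:ℝ)-2*(ℓ:ℝ)*(j:ℝ)) * x))
        = ∑ j ∈ Finset.range m,
        (∑ k ∈ Finset.range ℓ, (((ℓ:ℝ)*(j:ℝ)+(k:ℝ)) * ((n:ℝ)+1-(ℓ:ℝ)-(ℓ:ℝ)*(j:ℝ)+(k:ℝ))))
          * Real.cos (((n:ℝ)+1-(ℓ:ℝ))*x + 2*(j:ℝ)*(-((ℓ:ℝ)*x))) := by
      apply Finset.sum_congr rfl
      intro j _
      congr 2
      ring
    rw [hsum_eq]
    refine le_trans habel ?_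
    have hb1 : |∑ k ∈ Finset.range ℓ,
        (((ℓ:ℝ)*((m-1:ℕ):ℝ)+(k:ℝ)) * ((n:ℝ)+1-(ℓ:ℝ)-(ℓ:ℝ)*((m-1:ℕ):ℝ)+(k:ℝ)))|
        ≤ (ℓ:ℝ)*(n:ℝ)^2 := hbB (m-1) (by omega)
    have hvarsum : (∑ j ∈ Finset.range (m-1),
        |(∑ k ∈ Finset.range ℓ,
            (((ℓ:ℝ)*((j+1:ℕ):ℝ)+(k:ℝ)) * ((n:ℝ)+1-(ℓ:ℝ)-(ℓ:ℝ)*((j+1:ℕ):ℝ)+(k:ℝ))))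
          - ∑ k ∈ Finset.range ℓ,
              (((ℓ:ℝ)*(j:ℝ)+(k:ℝ)) * ((n:ℝ)+1-(ℓ:ℝ)-(ℓ:ℝ)*(j:ℝ)+(k:ℝ)))|)
        ≤ 2*(ℓ:ℝ)*(n:ℝ)^2 := by
      calc (∑ j ∈ Finset.range (m-1), |(∑ k ∈ Finset.range ℓ,
            (((ℓ:ℝ)*((j+1:ℕ):ℝ)+(k:ℝ)) * ((n:ℝ)+1-(ℓ:ℝ)-(ℓ:ℝ)*((j+1:ℕ):ℝ)+(k:ℝ))))
          - ∑ k ∈ Finset.range ℓ,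
              (((ℓ:ℝ)*(j:ℝ)+(k:ℝ)) * ((n:ℝ)+1-(ℓ:ℝ)-(ℓ:ℝ)*(j:ℝ)+(k:ℝ)))|)
          ≤ ∑ _j ∈ Finset.range (m-1), 2*(ℓ:ℝ)^2*(n:ℝ) := by
            apply Finset.sum_le_sum
            intro j hj
            exact hvarB j (by have := Finset.mem_range.1 hj; omega)
        _ = ((m-1:ℕ):ℝ) * (2*(ℓ:ℝ)^2*(n:ℝ)) := by
            rw [Finset.sum_const, Finset.card_range, nsmul_eq_mul]
        _ ≤ 2*(ℓ:ℝ)*(n:ℝ)^2 := by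
            have c2 : ((m-1:ℕ):ℝ) ≤ (m:ℝ) := by
              exact_mod_cast Nat.sub_le m 1
            have c3 : (ℓ:ℝ)*((m-1:ℕ):ℝ) ≤ (ℓ:ℝ)*(m:ℝ) :=
              mul_le_mul_of_nonneg_left c2 (Nat.cast_nonneg ℓ)
            have c4 : (ℓ:ℝ)*((m-1:ℕ):ℝ) ≤ (n:ℝ) := le_trans c3 hPnR
            have c5 : (2*(ℓ:ℝ)*(n:ℝ))*((ℓ:ℝ)*((m-1:ℕ):ℝ)) ≤ (2*(ℓ:ℝ)*(n:ℝ))*(n:ℝ) :=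
              mul_le_mul_of_nonneg_left c4 (by positivity)
            nlinarith only [c5]
    have hM0 : (0:ℝ) ≤ π/2*εa/(ℓ:ℝ) := by positivity
    calc π/2*εa/(ℓ:ℝ) * (|∑ k ∈ Finset.range ℓ,
            (((ℓ:ℝ)*((m-1:ℕ):ℝ)+(k:ℝ)) * ((n:ℝ)+1-(ℓ:ℝ)-(ℓ:ℝ)*((m-1:ℕ):ℝ)+(k:ℝ)))|
          + ∑ j ∈ Finset.range (m-1),
            |(∑ k ∈ Finset.range ℓ,
                (((ℓ:ℝ)*((j+1:ℕ):ℝ)+(k:ℝ)) * ((n:ℝ)+1-(ℓ:ℝ)-(ℓ:ℝ)*((j+1:ℕ):ℝ)+(k:ℝ))))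
              - ∑ k ∈ Finset.range ℓ,
                  (((ℓ:ℝ)*(j:ℝ)+(k:ℝ)) * ((n:ℝ)+1-(ℓ:ℝ)-(ℓ:ℝ)*(j:ℝ)+(k:ℝ)))|)
        ≤ π/2*εa/(ℓ:ℝ) * ((ℓ:ℝ)*(n:ℝ)^2 + 2*(ℓ:ℝ)*(n:ℝ)^2) :=
          mul_le_mul_of_nonneg_left (add_le_add hb1 hvarsum) hM0
      _ = 3*(π/2)*εa*(n:ℝ)^2 := by
          field_simp
          ring
      _ ≤ 6 * εa * (n:ℝ)^2 := by
          have hq := mul_le_mul_of_nonneg_right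
            (show (3:ℝ)*(π/2) ≤ 6 by linarith [Real.pi_le_four])
            (mul_nonneg hεa0.le (sq_nonneg (n:ℝ)))
          nlinarith only [hq]
  -- Δ bound
  have hΔb : |∑ j ∈ Finset.range m, ∑ k ∈ Finset.range ℓ,
      ((((ℓ:ℝ)*(j:ℝ)+(k:ℝ)) * ((n:ℝ)+1-(ℓ:ℝ)-(ℓ:ℝ)*(j:ℝ)+(k:ℝ)))
        - (ℓ:ℝ)*(j:ℝ)*((n:ℝ)-(ℓ:ℝ)*(j:ℝ)))
        * Real.cos (((n:ℝ)+1-(ℓ:ℝ)+2*(k:ℝ)) * x)| ≤ 4*(ℓ:ℝ)*(n:ℝ)^2 := by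
    refine le_trans (Finset.abs_sum_le_sum_abs _ _) ?_
    have inner : ∀ j ∈ Finset.range m,
        |∑ k ∈ Finset.range ℓ,
          ((((ℓ:ℝ)*(j:ℝ)+(k:ℝ)) * ((n:ℝ)+1-(ℓ:ℝ)-(ℓ:ℝ)*(j:ℝ)+(k:ℝ)))
            - (ℓ:ℝ)*(j:ℝ)*((n:ℝ)-(ℓ:ℝ)*(j:ℝ)))
            * Real.cos (((n:ℝ)+1-(ℓ:ℝ)+2*(k:ℝ)) * x)|
          ≤ (ℓ:ℝ) * (4*(ℓ:ℝ)*(n:ℝ)) := by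
      intro j hj
      refine le_trans (Finset.abs_sum_le_sum_abs _ _) ?_
      calc (∑ k ∈ Finset.range ℓ,
            |((((ℓ:ℝ)*(j:ℝ)+(k:ℝ)) * ((n:ℝ)+1-(ℓ:ℝ)-(ℓ:ℝ)*(j:ℝ)+(k:ℝ)))
              - (ℓ:ℝ)*(j:ℝ)*((n:ℝ)-(ℓ:ℝ)*(j:ℝ)))
              * Real.cos (((n:ℝ)+1-(ℓ:ℝ)+2*(k:ℝ)) * x)|)
          ≤ ∑ _k ∈ Finset.range ℓ, 4*(ℓ:ℝ)*(n:ℝ) := by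
            apply Finset.sum_le_sum
            intro k hk
            rw [abs_mul]
            calc |(((ℓ:ℝ)*(j:ℝ)+(k:ℝ)) * ((n:ℝ)+1-(ℓ:ℝ)-(ℓ:ℝ)*(j:ℝ)+(k:ℝ)))
                  - (ℓ:ℝ)*(j:ℝ)*((n:ℝ)-(ℓ:ℝ)*(j:ℝ))|
                * |Real.cos (((n:ℝ)+1-(ℓ:ℝ)+2*(k:ℝ)) * x)|
                ≤ (4*(ℓ:ℝ)*(n:ℝ)) * 1 :=
                  mul_le_mul ((hPFfacts j (Finset.mem_range.1 hj) k (Finset.mem_range.1 hk)).2)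
                    (Real.abs_cos_le_one _) (abs_nonneg _) (by positivity)
              _ = 4*(ℓ:ℝ)*(n:ℝ) := mul_one _
        _ = (ℓ:ℝ) * (4*(ℓ:ℝ)*(n:ℝ)) := by
            rw [Finset.sum_const, Finset.card_range, nsmul_eq_mul]
    calc (∑ j ∈ Finset.range m, |∑ k ∈ Finset.range ℓ,
          ((((ℓ:ℝ)*(j:ℝ)+(k:ℝ)) * ((n:ℝ)+1-(ℓ:ℝ)-(ℓ:ℝ)*(j:ℝ)+(k:ℝ)))
            - (ℓ:ℝ)*(j:ℝ)*((n:ℝ)-(ℓ:ℝ)*(j:ℝ)))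
            * Real.cos (((n:ℝ)+1-(ℓ:ℝ)+2*(k:ℝ)) * x)|)
        ≤ ∑ _j ∈ Finset.range m, (ℓ:ℝ) * (4*(ℓ:ℝ)*(n:ℝ)) := Finset.sum_le_sum inner
      _ = (m:ℝ) * ((ℓ:ℝ) * (4*(ℓ:ℝ)*(n:ℝ))) := by
          rw [Finset.sum_const, Finset.card_range, nsmul_eq_mul]
      _ ≤ 4*(ℓ:ℝ)*(n:ℝ)^2 := by
          have c5 : (4*(ℓ:ℝ)*(n:ℝ))*((ℓ:ℝ)*(m:ℝ)) ≤ (4*(ℓ:ℝ)*(n:ℝ))*(n:ℝ) :=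
            mul_le_mul_of_nonneg_left hPnR (by positivity)
          nlinarith only [c5]
  -- the exact k-sum identity
  have hK : (∑ k ∈ Finset.range ℓ, Real.cos (((n:ℝ)+1-(ℓ:ℝ)+2*(k:ℝ)) * x))
      = Real.sin ((ℓ:ℝ)*x) * Real.cos ((n:ℝ)*x) / Real.sin x := by
    have t := telescope_cos (((n:ℝ)+1-(ℓ:ℝ))*x) x ℓ
    have e : (∑ k ∈ Finset.range ℓ, Real.cos (((n:ℝ)+1-(ℓ:ℝ)+2*(k:ℝ)) * x))
        = ∑ k ∈ Finset.range ℓ, Real.cos ((((n:ℝ)+1-(ℓ:ℝ))*x) + 2*(k:ℝ)*x) := by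
      apply Finset.sum_congr rfl
      intro k _
      congr 1
      ring
    rw [show (((n:ℝ)+1-(ℓ:ℝ))*x) + (2*(ℓ:ℝ)-1)*x = ((n:ℝ)+(ℓ:ℝ))*x by ring,
        show (((n:ℝ)+1-(ℓ:ℝ))*x) - x = ((n:ℝ)-(ℓ:ℝ))*x by ring,
        Real.sin_sub_sin,
        show (((n:ℝ)+(ℓ:ℝ))*x - ((n:ℝ)-(ℓ:ℝ))*x)/2 = (ℓ:ℝ)*x by ring,
        show (((n:ℝ)+(ℓ:ℝ))*x + ((n:ℝ)-(ℓ:ℝ))*x)/2 = (n:ℝ)*x by ring] at t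
    rw [e, eq_div_iff hsinx_ne]
    linarith [t]
  -- A-sum estimate
  have hAsum : |(∑ j ∈ Finset.range m, (ℓ:ℝ)*(j:ℝ)*((n:ℝ)-(ℓ:ℝ)*(j:ℝ)))
      - (n:ℝ)^3/(12*(ℓ:ℝ))| ≤ 6*(n:ℝ)^2 := by
    have e : (∑ j ∈ Finset.range m, (ℓ:ℝ)*(j:ℝ)*((n:ℝ)-(ℓ:ℝ)*(j:ℝ)))
        = (ℓ:ℝ)*(n:ℝ)*(∑ j ∈ Finset.range m, (j:ℝ))
          - (ℓ:ℝ)^2*(∑ j ∈ Finset.range m, (j:ℝ)^2) := by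
      rw [Finset.mul_sum, Finset.mul_sum, ← Finset.sum_sub_distrib]
      apply Finset.sum_congr rfl
      intro j _
      ring
    rw [e]
    have hnReq : (n:ℝ) = 2*(ℓ:ℝ)*(m:ℝ) + ((R:ℝ)-1) := by
      have h2 := congrArg (fun t : ℕ => (t:ℝ)) hnP
      push_cast at h2
      linarith
    have hu2R : (R:ℝ)-1 ≤ 2*(ℓ:ℝ)-2 := by
      have h1 : (R:ℤ) ≤ 2*(ℓ:ℤ)-1 := by omega
      have h2 := (@Int.cast_le ℝ _ _ _).2 h1
      push_cast at h2
      linarith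
    have hLnR : (ℓ:ℝ) ≤ (n:ℝ) := by exact_mod_cast hℓn
    exact poly_est (ℓ:ℝ) (m:ℝ) ((R:ℝ)-1) (n:ℝ) _ _ hℓ1R (by exact_mod_cast hm1)
      (by linarith [Nat.cast_nonneg (α := ℝ) R]) hu2R hnReq hn1R hLnR
      (sum_range_id_cast m) (sum_range_sq_cast m)
  -- main term estimate
  have hmainb : |((∑ j ∈ Finset.range m, (ℓ:ℝ)*(j:ℝ)*((n:ℝ)-(ℓ:ℝ)*(j:ℝ)))
        * (∑ k ∈ Finset.range ℓ, Real.cos (((n:ℝ)+1-(ℓ:ℝ)+2*(k:ℝ)) * x)))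
      - (n:ℝ)^3 * uFun ℓ x * Real.cos ((n:ℝ)*x) / 12| ≤ 12 * εa * (n:ℝ)^2 := by
    have hfact : ((∑ j ∈ Finset.range m, (ℓ:ℝ)*(j:ℝ)*((n:ℝ)-(ℓ:ℝ)*(j:ℝ)))
          * (∑ k ∈ Finset.range ℓ, Real.cos (((n:ℝ)+1-(ℓ:ℝ)+2*(k:ℝ)) * x)))
        - (n:ℝ)^3 * uFun ℓ x * Real.cos ((n:ℝ)*x) / 12
        = ((∑ j ∈ Finset.range m, (ℓ:ℝ)*(j:ℝ)*((n:ℝ)-(ℓ:ℝ)*(j:ℝ))) - (n:ℝ)^3/(12*(ℓ:ℝ)))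
            * (Real.sin ((ℓ:ℝ)*x) * Real.cos ((n:ℝ)*x) / Real.sin x) := by
      rw [hK]
      simp only [uFun]
      have hℓne : (ℓ:ℝ) ≠ 0 := by positivity
      field_simp
    rw [hfact, abs_mul]
    have h2 : |Real.sin ((ℓ:ℝ)*x) * Real.cos ((n:ℝ)*x) / Real.sin x| ≤ π/2*εa := by
      rw [abs_div, abs_mul, abs_of_pos hsinx_pos]
      have hnum : |Real.sin ((ℓ:ℝ)*x)| * |Real.cos ((n:ℝ)*x)| ≤ 1 :=
        mul_le_one₀ (Real.abs_sin_le_one _) (abs_nonneg _) (Real.abs_cos_le_one _)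
      calc |Real.sin ((ℓ:ℝ)*x)| * |Real.cos ((n:ℝ)*x)| / Real.sin x
          ≤ 1 / Real.sin x := (div_le_div_iff_of_pos_right hsinx_pos).2 hnum
        _ ≤ π/2*εa := hsx_inv
    calc |(∑ j ∈ Finset.range m, (ℓ:ℝ)*(j:ℝ)*((n:ℝ)-(ℓ:ℝ)*(j:ℝ))) - (n:ℝ)^3/(12*(ℓ:ℝ))|
          * |Real.sin ((ℓ:ℝ)*x) * Real.cos ((n:ℝ)*x) / Real.sin x|
        ≤ (6*(n:ℝ)^2) * (π/2*εa) :=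
          mul_le_mul hAsum h2 (abs_nonneg _) (by positivity)
      _ ≤ 12 * εa * (n:ℝ)^2 := by
          have hq := mul_le_mul_of_nonneg_right
            (show π/2 ≤ (2:ℝ) by linarith [Real.pi_le_four])
            (mul_nonneg hεa0.le (sq_nonneg (n:ℝ)))
          nlinarith only [hq]
  -- final assembly
  have hgsplit : (∑ j ∈ Finset.range m, ∑ k ∈ Finset.range ℓ,
        (((ℓ * j + k : ℕ) : ℝ)^2 * Real.sin (((ℓ * j + k : ℕ) : ℝ) * x)^2
          + ((n - ℓ + 1 - ℓ * j + k : ℕ) : ℝ)^2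
              * Real.sin (((n - ℓ + 1 - ℓ * j + k : ℕ) : ℝ) * x)^2))
      = (∑ j ∈ Finset.range m, ∑ k ∈ Finset.range ℓ,
          ((ℓ * j + k : ℕ) : ℝ)^2 * Real.sin (((ℓ * j + k : ℕ) : ℝ) * x)^2)
        + (∑ j ∈ Finset.range m, ∑ k ∈ Finset.range ℓ,
            ((n - ℓ + 1 - ℓ * j + k : ℕ) : ℝ)^2
              * Real.sin (((n - ℓ + 1 - ℓ * j + k : ℕ) : ℝ) * x)^2) := by
    rw [← Finset.sum_add_distrib]
    exact Finset.sum_congr rfl fun j _ => Finset.sum_add_distrib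
  have hDbound : |(∑ t ∈ Finset.range (n+1), ((t:ℕ):ℝ)^2 * Real.sin (((t:ℕ):ℝ) * x)^2)
      - (n:ℝ)^3/6| ≤ (n:ℝ)^2 + π/2*εa*(n:ℝ)^2 := by
    rw [hD1]
    have e : (∑ t ∈ Finset.range (n+1), ((t:ℕ):ℝ)^2)/2
          - (∑ t ∈ Finset.range (n+1), ((t:ℕ):ℝ)^2 * Real.cos (2*((t:ℕ):ℝ)*x))/2
          - (n:ℝ)^3/6
        = ((∑ t ∈ Finset.range (n+1), ((t:ℕ):ℝ)^2)/2 - (n:ℝ)^3/6)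
          - (∑ t ∈ Finset.range (n+1), ((t:ℕ):ℝ)^2 * Real.cos (2*((t:ℕ):ℝ)*x))/2 := by ring
    rw [e]
    refine le_trans (abs_sub _ _) ?_
    have h3 : |(∑ t ∈ Finset.range (n+1), ((t:ℕ):ℝ)^2 * Real.cos (2*((t:ℕ):ℝ)*x))/2|
        = |∑ t ∈ Finset.range (n+1), ((t:ℕ):ℝ)^2 * Real.cos (2*((t:ℕ):ℝ)*x)|/2 := by
      rw [abs_div]
      norm_num
    rw [h3]
    linarith only [hmean, hosc]
  set DD := (∑ t ∈ Finset.range (n+1), ((t:ℕ):ℝ)^2 * Real.sin (((t:ℕ):ℝ) * x)^2)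
      - (n:ℝ)^3/6 with hDD
  set X1v := ∑ j ∈ Finset.range m,
      (∑ k ∈ Finset.range ℓ, (((ℓ:ℝ)*(j:ℝ)+(k:ℝ)) * ((n:ℝ)+1-(ℓ:ℝ)-(ℓ:ℝ)*(j:ℝ)+(k:ℝ))))
        * Real.cos (((n:ℝ)+1-(ℓ:ℝ)-2*(ℓ:ℝ)*(j:ℝ)) * x) with hX1v
  set Dv := ∑ j ∈ Finset.range m, ∑ k ∈ Finset.range ℓ,
      ((((ℓ:ℝ)*(j:ℝ)+(k:ℝ)) * ((n:ℝ)+1-(ℓ:ℝ)-(ℓ:ℝ)*(j:ℝ)+(k:ℝ)))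
        - (ℓ:ℝ)*(j:ℝ)*((n:ℝ)-(ℓ:ℝ)*(j:ℝ)))
        * Real.cos (((n:ℝ)+1-(ℓ:ℝ)+2*(k:ℝ)) * x) with hDv
  set Mv := ((∑ j ∈ Finset.range m, (ℓ:ℝ)*(j:ℝ)*((n:ℝ)-(ℓ:ℝ)*(j:ℝ)))
        * (∑ k ∈ Finset.range ℓ, Real.cos (((n:ℝ)+1-(ℓ:ℝ)+2*(k:ℝ)) * x)))
      - (n:ℝ)^3 * uFun ℓ x * Real.cos ((n:ℝ)*x) / 12 with hMv
  have key : ((∑ j ∈ Finset.range m, ∑ k ∈ Finset.range ℓ,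
        (((ℓ * j + k : ℕ) : ℝ) * Real.sin (((ℓ * j + k : ℕ) : ℝ) * x)
          + ((n - ℓ + 1 - ℓ * j + k : ℕ) : ℝ)
              * Real.sin (((n - ℓ + 1 - ℓ * j + k : ℕ) : ℝ) * x)) ^ 2)
        + (∑ i ∈ Finset.range R,
            ((ℓ * m + i : ℕ) : ℝ) ^ 2 * Real.sin (((ℓ * m + i : ℕ) : ℝ) * x) ^ 2))
      - (n:ℝ) ^ 3 * (2 - uFun ℓ x * Real.cos ((n:ℝ) * x)) / 12
      = DD + X1v - Dv - Mv := by
    rw [hDD, hX1v, hDv, hMv]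
    rw [hsplit, hgsplit, hSg1, hSg2, hSB]
    linear_combination hdiag
  have hpow : (n:ℝ)^((2:ℝ)+a) = (n:ℝ)^2 * εa := by
    rw [show (2:ℝ)+a = ((2:ℕ):ℝ)+a by norm_num, Real.rpow_add hn0R, Real.rpow_natCast]
  rw [key, hpow]
  have t1 := abs_sub (DD + X1v - Dv) Mv
  have t2 := abs_sub (DD + X1v) Dv
  have t3 := abs_add_le DD X1v
  have q0 : (0:ℝ) ≤ (n:ℝ)^2*εa := by positivity
  have q1 : (n:ℝ)^2 ≤ (n:ℝ)^2*εa := by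
    nlinarith only [mul_le_mul_of_nonneg_left hεa1 (sq_nonneg (n:ℝ))]
  have q2 : π/2*εa*(n:ℝ)^2 ≤ 2*εa*(n:ℝ)^2 := by
    nlinarith only [mul_le_mul_of_nonneg_right
      (show π/2 ≤ (2:ℝ) by linarith [Real.pi_le_four])
      (mul_nonneg hεa0.le (sq_nonneg (n:ℝ)))]
  have q3 : 4*(ℓ:ℝ)*(n:ℝ)^2 ≤ 4*(ℓ:ℝ)*((n:ℝ)^2*εa) :=
    mul_le_mul_of_nonneg_left q1 (by positivity)
  linarith only [t1, t2, t3, hDbound, hX1b, hΔb, hmainb, q0, q1, q2, q3, hℓ1R,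
    mul_le_mul_of_nonneg_right hℓ1R q0]
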